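/- Let s̃ ∈ (1/3, 1/√3) and p₋ > 0. Define p₊ = p₋ (9s̃² − 1)/(3(1 − s̃²)), v₊ = (3/2)s̃ − 1/(2s̃), v₋ = 0, u_± = v_±/√(1 − v_±²), and (a_±, b_±) = Θ(p_±, u_±). Then the Rankine–Hugoniot conditions for a 3-shock with speed s̃ hold: s̃ (a₊ − a₋) = b₊ − b₋ and s̃ (b₊ − b₋) = c(a₊,b₊) − c(a₋,b₋), where c(a,b) = (5/3)a − (2/3)√(4a² − 3b²). -/

import Mathlib

/-! In terms of the velocity `v = u / √(1 + u²)`, `Θ(p, u)` is the energy and momentum density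
`(p(3 + v²), 4pv) / (1 - v²)` of the ultra-relativistic fluid, and `c ∘ Θ = p(1 + 3v²) / (1 - v²)`
is its momentum flux. For the state at rest ahead of the shock and the given `p₊`, `v₊`, the
Rankine–Hugoniot conditions become rational identities in `s̃`. -/

open Real

/-- The one-dimensional state transformation `Θ(p,u) = (p(3+4u²), 4pu√(1+u²))`. -/
noncomputable def theta (p u : ℝ) : ℝ × ℝ :=
  (p * (3 + 4 * u ^ 2), 4 * p * u * Real.sqrt (1 + u ^ 2))

/-- The flux function `c(a,b) = (5/3)a − (2/3)√(4a² − 3b²)` of the radially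
symmetric system. -/
noncomputable def cFlux (a b : ℝ) : ℝ :=
  (5 / 3) * a - (2 / 3) * Real.sqrt (4 * a ^ 2 - 3 * b ^ 2)

lemma sqrt_one_add_sq_div_sqrt_one_sub_sq {v : ℝ} (hv : v ^ 2 < 1) :
    √(1 + (v / √(1 - v ^ 2)) ^ 2) = 1 / √(1 - v ^ 2) := by
  have hw : 0 < 1 - v ^ 2 := by linarith
  have h : 1 + (v / √(1 - v ^ 2)) ^ 2 = (1 - v ^ 2)⁻¹ := by
    rw [div_pow, sq_sqrt hw.le]
    field_simp
    ring
  rw [h, sqrt_inv, one_div]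

lemma theta_velocity (p : ℝ) {v : ℝ} (hv : v ^ 2 < 1) :
    theta p (v / √(1 - v ^ 2)) = (p * (3 + v ^ 2) / (1 - v ^ 2), 4 * p * v / (1 - v ^ 2)) := by
  have hw : 0 < 1 - v ^ 2 := by linarith
  rw [theta, sqrt_one_add_sq_div_sqrt_one_sub_sq hv, div_pow, sq_sqrt hw.le]
  congr 1
  · field_simp
    ring
  · field_simp
    rw [sq_sqrt hw.le]

lemma cFlux_velocity {p v : ℝ} (hp : 0 ≤ p) (hv : v ^ 2 < 1) :
    cFlux (p * (3 + v ^ 2) / (1 - v ^ 2)) (4 * p * v / (1 - v ^ 2)) =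
      p * (1 + 3 * v ^ 2) / (1 - v ^ 2) := by
  have hw : 0 < 1 - v ^ 2 := by linarith
  have hdisc : 4 * (p * (3 + v ^ 2) / (1 - v ^ 2)) ^ 2 - 3 * (4 * p * v / (1 - v ^ 2)) ^ 2 =
      (2 * p * (3 - v ^ 2) / (1 - v ^ 2)) ^ 2 := by
    field_simp
    ring
  have hroot : 0 ≤ 2 * p * (3 - v ^ 2) / (1 - v ^ 2) := by
    apply div_nonneg _ hw.le
    nlinarith
  rw [cFlux, hdisc, sqrt_sq hroot]
  field_simp
  ring

lemma one_sub_sq_shock_velocity {s : ℝ} (hs : s ≠ 0) :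
    1 - ((3 / 2) * s - 1 / (2 * s)) ^ 2 = (9 * s ^ 2 - 1) * (1 - s ^ 2) / (4 * s ^ 2) := by
  field_simp
  ring

lemma shock_velocity_sq_lt_one {s : ℝ} (hs1 : 1 / 3 < s) (hs2 : s < 1) :
    ((3 / 2) * s - 1 / (2 * s)) ^ 2 < 1 := by
  have hpos : 0 < (9 * s ^ 2 - 1) * (1 - s ^ 2) / (4 * s ^ 2) := by
    apply div_pos (mul_pos _ _) <;> nlinarith
  linarith [one_sub_sq_shock_velocity (by positivity : s ≠ 0)]

lemma rankine_hugoniot_shock_from_rest {s p q v : ℝ} (hs : s ≠ 0) (hs1 : 1 - s ^ 2 ≠ 0)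
    (hs9 : 9 * s ^ 2 - 1 ≠ 0) (hq : q = p * (9 * s ^ 2 - 1) / (3 * (1 - s ^ 2)))
    (hv : v = (3 / 2) * s - 1 / (2 * s)) :
    s * (q * (3 + v ^ 2) / (1 - v ^ 2) - p * 3) = 4 * q * v / (1 - v ^ 2) ∧
      s * (4 * q * v / (1 - v ^ 2)) = q * (1 + 3 * v ^ 2) / (1 - v ^ 2) - p := by
  have hw : 1 - v ^ 2 = (9 * s ^ 2 - 1) * (1 - s ^ 2) / (4 * s ^ 2) := by
    rw [hv, one_sub_sq_shock_velocity hs]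
  have hqw : q / (1 - v ^ 2) = 4 * p * s ^ 2 / (3 * (1 - s ^ 2) ^ 2) := by
    rw [hq, hw]
    field_simp
  have hv' : v = (3 * s ^ 2 - 1) / (2 * s) := by
    rw [hv]
    field_simp
  rw [mul_div_right_comm q, mul_div_right_comm q, mul_div_right_comm (4 * q),
    mul_div_assoc 4 q, hqw, hv']
  constructor <;>
  · field_simp
    ring

/-- The Rankine–Hugoniot conditions for the 3-shock with speed `s̃ ∈ (1/3, 1/√3)`:
with `p₊ = p₋ (9s̃²−1)/(3(1−s̃²))`, `v₊ = (3/2)s̃ − 1/(2s̃)`, `v₋ = 0`,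
`u_± = v_±/√(1−v_±²)` and `(a_±,b_±) = Θ(p_±,u_±)`, one has
`s̃(a₊−a₋) = b₊−b₋` and `s̃(b₊−b₋) = c(a₊,b₊) − c(a₋,b₋)`. -/
theorem rankine_hugoniot_three_shock (s pm : ℝ)
    (hs1 : 1 / 3 < s) (hs2 : s < 1 / Real.sqrt 3) (hpm : 0 < pm)
    (pp vp vm up um ap bp am bm : ℝ)
    (hpp : pp = pm * (9 * s ^ 2 - 1) / (3 * (1 - s ^ 2)))
    (hvp : vp = (3 / 2) * s - 1 / (2 * s))
    (hvm : vm = 0)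
    (hup : up = vp / Real.sqrt (1 - vp ^ 2))
    (hum : um = vm / Real.sqrt (1 - vm ^ 2))
    (habp : (ap, bp) = theta pp up)
    (habm : (am, bm) = theta pm um) :
    s * (ap - am) = bp - bm ∧
      s * (bp - bm) = cFlux ap bp - cFlux am bm := by
  have hs_lt_one : s < 1 := hs2.trans <| by
    rw [div_lt_one (by positivity), lt_sqrt zero_le_one]; norm_num
  have hs0 : 0 < s := by linarith
  have hs_sq : 0 < 1 - s ^ 2 := by nlinarith
  have hs9 : 0 < 9 * s ^ 2 - 1 := by nlinarith
  have hvp_sq : vp ^ 2 < 1 := hvp ▸ shock_velocity_sq_lt_one hs1 hs_lt_one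
  have hpp0 : 0 ≤ pp := by rw [hpp]; positivity
  rw [hup, theta_velocity pp hvp_sq, Prod.mk.injEq] at habp
  rw [hum, hvm, theta_velocity pm (by norm_num), Prod.mk.injEq] at habm
  obtain ⟨rfl, rfl⟩ := habp
  obtain ⟨rfl, rfl⟩ := habm
  rw [cFlux_velocity hpp0 hvp_sq, cFlux_velocity hpm.le (by norm_num)]
  simpa using rankine_hugoniot_shock_from_rest hs0.ne' hs_sq.ne' hs9.ne' hpp hvp
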